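/- arXiv:2103.11160 — 8 statements merged into one kernel-verified Lean document; each statement's English description precedes it below -/
import Mathlib

section
/- Let τ ≥ 0 and let r : [0,∞) → [0,∞) be a 0-rough contraction, let 0 < ε < 1, and suppose that for all t,t' with r(t^ε) ≥ 1 and r(t'^ε) ≥ 1 one has |r(t^ε)^{1/ε} − r(t'^ε)^{1/ε}| ≤ |t−t'|. Set δ := sup{u ≥ 0 : r(u^ε) ≤ 1}, and assume δ < ∞. Then for all u,u' ≥ 0, |r(u^ε)^{1/ε} − r(u'^ε)^{1/ε}| ≤ |u−u'| + 2δ; in particular t ↦ r(t^ε)^{1/ε} is a 2δ-rough contraction. -/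
/-- A τ-rough contraction `σ : [0,∞) → [0,∞)`: `σ(0)=0`, `σ(t) → ∞`, `σ(t) ≤ t`,
`|σ(t)−σ(s)| ≤ |t−s| + τ`, and `σ` is non-decreasing (on `[0,∞)`). -/
def RoughContraction (τ : ℝ) (σ : ℝ → ℝ) : Prop :=
  σ 0 = 0 ∧ Filter.Tendsto σ Filter.atTop Filter.atTop ∧
  (∀ t, 0 ≤ t → 0 ≤ σ t) ∧ (∀ t, 0 ≤ t → σ t ≤ t) ∧
  (∀ s t, 0 ≤ s → 0 ≤ t → |σ t - σ s| ≤ |t - s| + τ) ∧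
  (∀ s t, 0 ≤ s → s ≤ t → σ s ≤ σ t)

/-- If `r` is a 0-rough contraction, `0 < ε < 1`, and `|r(t^ε)^{1/ε} − r(t'^ε)^{1/ε}| ≤ |t−t'|`
whenever `r(t^ε) ≥ 1` and `r(t'^ε) ≥ 1`, then with `δ := sup{u ≥ 0 : r(u^ε) ≤ 1}` (assumed
finite, i.e. the set is bounded above) one has
`|r(u^ε)^{1/ε} − r(u'^ε)^{1/ε}| ≤ |u−u'| + 2δ` for all `u,u' ≥ 0`;
in particular `t ↦ r(t^ε)^{1/ε}` is a `2δ`-rough contraction. -/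
theorem stmt_2 (τ : ℝ) (hτ : 0 ≤ τ) (r : ℝ → ℝ) (hr : RoughContraction 0 r)
    (ε : ℝ) (hε0 : 0 < ε) (hε1 : ε < 1)
    (hlip : ∀ t t' : ℝ, 0 ≤ t → 0 ≤ t' → 1 ≤ r (t ^ ε) → 1 ≤ r (t' ^ ε) →
      |r (t ^ ε) ^ (1/ε) - r (t' ^ ε) ^ (1/ε)| ≤ |t - t'|)
    (hbdd : BddAbove {u : ℝ | 0 ≤ u ∧ r (u ^ ε) ≤ 1}) :
    (∀ u u' : ℝ, 0 ≤ u → 0 ≤ u' →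
      |r (u ^ ε) ^ (1/ε) - r (u' ^ ε) ^ (1/ε)|
        ≤ |u - u'| + 2 * sSup {u : ℝ | 0 ≤ u ∧ r (u ^ ε) ≤ 1}) ∧
    RoughContraction (2 * sSup {u : ℝ | 0 ≤ u ∧ r (u ^ ε) ≤ 1})
      (fun t => r (t ^ ε) ^ (1/ε)) := by
  obtain ⟨hr0, hrtop, hrnn, hrle, hrlip, hrmono⟩ := hr
  set δ := sSup {u : ℝ | 0 ≤ u ∧ r (u ^ ε) ≤ 1} with hδdef
  have h0S : (0:ℝ) ∈ {u : ℝ | 0 ≤ u ∧ r (u ^ ε) ≤ 1} := by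
    refine ⟨le_refl 0, ?_⟩
    rw [Real.zero_rpow (ne_of_gt hε0), hr0]; norm_num
  have hδ0 : 0 ≤ δ := le_csSup hbdd h0S
  have hεinv : 0 < 1/ε := by positivity
  have hfnn : ∀ u : ℝ, 0 ≤ u → 0 ≤ r (u ^ ε) ^ (1/ε) := fun u hu =>
    Real.rpow_nonneg (hrnn _ (Real.rpow_nonneg hu ε)) _
  have hfle : ∀ u : ℝ, 0 ≤ u → r (u ^ ε) ^ (1/ε) ≤ u := by
    intro u hu
    calc r (u ^ ε) ^ (1/ε) ≤ (u ^ ε) ^ (1/ε) :=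
          Real.rpow_le_rpow (hrnn _ (Real.rpow_nonneg hu ε))
            (hrle _ (Real.rpow_nonneg hu ε)) hεinv.le
      _ = u := by
          rw [← Real.rpow_mul hu, mul_one_div, div_self (ne_of_gt hε0), Real.rpow_one]
  have hfmono : ∀ u u' : ℝ, 0 ≤ u → u ≤ u' → r (u ^ ε) ^ (1/ε) ≤ r (u' ^ ε) ^ (1/ε) := by
    intro u u' hu huu'
    exact Real.rpow_le_rpow (hrnn _ (Real.rpow_nonneg hu ε))
      (hrmono _ _ (Real.rpow_nonneg hu ε) (Real.rpow_le_rpow hu huu' hε0.le)) hεinv.le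
  have key : ∀ u u' : ℝ, 0 ≤ u' → u' ≤ u →
      r (u ^ ε) ^ (1/ε) - r (u' ^ ε) ^ (1/ε) ≤ |u - u'| + 2 * δ := by
    intro u u' hu' huu'
    have hu : 0 ≤ u := le_trans hu' huu'
    by_cases h1 : 1 ≤ r (u' ^ ε)
    · have h2 : 1 ≤ r (u ^ ε) :=
        le_trans h1 (hrmono _ _ (Real.rpow_nonneg hu' ε) (Real.rpow_le_rpow hu' huu' hε0.le))
      have h3 := le_trans (le_abs_self _) (hlip u u' hu hu' h2 h1)
      nlinarith
    · push_neg at h1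
      have hu'δ : u' ≤ δ := le_csSup hbdd ⟨hu', h1.le⟩
      have h4 := hfle u hu
      have h5 := hfnn u' hu'
      have h6 : u - u' ≤ |u - u'| := le_abs_self _
      linarith
  have main : ∀ u u' : ℝ, 0 ≤ u → 0 ≤ u' →
      |r (u ^ ε) ^ (1/ε) - r (u' ^ ε) ^ (1/ε)| ≤ |u - u'| + 2 * δ := by
    intro u u' hu hu'
    rcases le_total u' u with h | h
    · rw [abs_of_nonneg (sub_nonneg.2 (hfmono _ _ hu' h))]
      exact key u u' hu' h
    · rw [abs_sub_comm, abs_sub_comm u u']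
      rw [abs_of_nonneg (sub_nonneg.2 (hfmono _ _ hu h))]
      exact key u' u hu h
  refine ⟨main, ?_, ?_, ?_, ?_, ?_, ?_⟩
  · simp only [Real.zero_rpow (ne_of_gt hε0), hr0]
    exact Real.zero_rpow (ne_of_gt hεinv)
  · exact (tendsto_rpow_atTop hεinv).comp (hrtop.comp (tendsto_rpow_atTop hε0))
  · exact hfnn
  · exact hfle
  · intro s t hs ht
    exact main t s ht hs
  · intro s t hs hst
    exact hfmono s t hs hst
end

section
/- Let X and Y be metric spaces and f : X → Y a bornologous map. Then f is coarsely n-to-one if and only if: for all R > 0 there exists S > 0 such that, for all n+1 points x_1, …, x_{n+1} ∈ X with d(x_i, x_j) > S for all i ≠ j, there exist indices 1 ≤ k < m ≤ n+1 with d(f(x_k), f(x_m)) > R. -/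
open Bornology Metric

/-- `f` is bornologous: there is a non-decreasing control function for distances. -/
def Bornologous {X Y : Type*} [PseudoMetricSpace X] [PseudoMetricSpace Y] (f : X → Y) : Prop :=
  ∃ ψ : ℝ → ℝ, Monotone ψ ∧ ∀ x x', dist (f x) (f x') ≤ ψ (dist x x')

/-- `f` is coarsely `n`-to-one: for all `R > 0` there is `S > 0` such that the preimage of
every (bounded) set of diameter `< R` is a union of `n` (bounded) sets of diameter `< S`. -/
def CoarselyNToOne {X Y : Type*} [PseudoMetricSpace X] [PseudoMetricSpace Y]
    (n : ℕ) (f : X → Y) : Prop :=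
  ∀ R > (0:ℝ), ∃ S > (0:ℝ), ∀ A : Set Y, IsBounded A → diam A < R →
    ∃ B : Fin n → Set X, (∀ i, IsBounded (B i) ∧ diam (B i) < S) ∧ f ⁻¹' A = ⋃ i, B i

/-- (Dydak–Virk) A bornologous map `f : X → Y` is coarsely `n`-to-one iff for all `R > 0`
there exists `S > 0` such that among any `n+1` points of `X` which are pairwise more than
`S` apart, two of them have images more than `R` apart. -/
theorem stmt_5 {X Y : Type*} [MetricSpace X] [MetricSpace Y]
    (f : X → Y) (hf : Bornologous f) (n : ℕ) :
    CoarselyNToOne n f ↔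
      ∀ R > (0:ℝ), ∃ S > (0:ℝ), ∀ x : Fin (n+1) → X,
        (∀ i j, i ≠ j → S < dist (x i) (x j)) →
        ∃ k m : Fin (n+1), k < m ∧ R < dist (f (x k)) (f (x m)) := by
  constructor
  · -- forward direction
    intro hc R hR
    obtain ⟨S, hS, hB⟩ := hc (R + 1) (by linarith)
    refine ⟨S, hS, ?_⟩
    intro x hx
    by_contra hcon
    push_neg at hcon
    have hdist : ∀ i j, dist (f (x i)) (f (x j)) ≤ R := by
      intro i j
      rcases lt_trichotomy i j with h | h | h
      · exact hcon i j h
      · simp [h, hR.le]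
      · rw [dist_comm]; exact hcon j i h
    have hAb : IsBounded (Set.range (f ∘ x)) := (Set.finite_range _).isBounded
    have hAd : diam (Set.range (f ∘ x)) < R + 1 := by
      refine lt_of_le_of_lt (diam_le_of_forall_dist_le hR.le ?_) (by linarith)
      rintro _ ⟨i, rfl⟩ _ ⟨j, rfl⟩
      exact hdist i j
    obtain ⟨B, hBd, hBU⟩ := hB _ hAb hAd
    have hchoice : ∀ i, ∃ j, x i ∈ B j := by
      intro i
      have : x i ∈ ⋃ j, B j := by
        rw [← hBU]; exact ⟨i, rfl⟩
      simpa [Set.mem_iUnion] using this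
    choose g hg using hchoice
    obtain ⟨i, i', hne, heq⟩ := Fintype.exists_ne_map_eq_of_card_lt g (by simp)
    have h1 : dist (x i) (x i') ≤ diam (B (g i)) :=
      dist_le_diam_of_mem (hBd (g i)).1 (hg i) (by rw [heq]; exact hg i')
    have h2 := hx i i' hne
    have h3 := (hBd (g i)).2
    linarith
  · -- backward direction
    intro h R hR
    classical
    obtain ⟨S, hSpos, hsep⟩ := h R hR
    refine ⟨2 * S + 1, by linarith, ?_⟩
    intro A hA hdiam
    set P := f ⁻¹' A with hPdef
    have claim1 : ∀ M : Finset X, ↑M ⊆ P →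
        (∀ a ∈ M, ∀ b ∈ M, a ≠ b → S < dist a b) → M.card ≤ n := by
      intro M hMP hMsep
      by_contra hc
      push_neg at hc
      obtain ⟨t, htM, htc⟩ := Finset.exists_subset_card_eq hc
      let e := t.equivFinOfCardEq htc
      set x : Fin (n+1) → X := fun i => ((e.symm i : t) : X) with hxdef
      have hxmem : ∀ i, x i ∈ t := fun i => (e.symm i).2
      have hxinj : Function.Injective x := by
        intro i j hij
        have : (e.symm i : t) = e.symm j := Subtype.ext hij
        simpa using e.symm.injective this
      have hpair : ∀ i j, i ≠ j → S < dist (x i) (x j) := by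
        intro i j hij
        exact hMsep _ (htM (hxmem i)) _ (htM (hxmem j)) (fun hEq => hij (hxinj hEq))
      obtain ⟨k, m, _, hkm⟩ := hsep x hpair
      have hkA : f (x k) ∈ A := hMP (htM (hxmem k))
      have hmA : f (x m) ∈ A := hMP (htM (hxmem m))
      have := dist_le_diam_of_mem hA hkA hmA
      linarith
    set Q : ℕ → Prop := fun k => ∃ M : Finset X, ↑M ⊆ P ∧
      (∀ a ∈ M, ∀ b ∈ M, a ≠ b → S < dist a b) ∧ M.card = k with hQdef
    have hQ0 : Q 0 := ⟨∅, by simp, by simp, rfl⟩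
    have hN : Q (Nat.findGreatest Q n) := Nat.findGreatest_spec (Nat.zero_le n) hQ0
    obtain ⟨M, hMP, hMsep, hMcard⟩ := hN
    have hMn : M.card ≤ n := claim1 M hMP hMsep
    have claim2 : ∀ p ∈ P, ∃ m ∈ M, dist p m ≤ S := by
      intro p hp
      by_contra hc
      push_neg at hc
      have hpM : p ∉ M := by
        intro hmem
        have := hc p hmem
        simp at this
        linarith
      have hins : Q (M.card + 1) := by
        refine ⟨insert p M, ?_, ?_, Finset.card_insert_of_notMem hpM⟩
        · intro a ha
          rcases Finset.mem_insert.mp ha with rfl | haM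
          · exact hp
          · exact hMP haM
        · intro a ha b hb hab
          rcases Finset.mem_insert.mp ha with rfl | haM <;>
            rcases Finset.mem_insert.mp hb with rfl | hbM
          · exact absurd rfl hab
          · exact hc b hbM
          · rw [dist_comm]; exact hc a haM
          · exact hMsep a haM b hbM hab
        -- done
      obtain ⟨M', hM'P, hM'sep, hM'card⟩ := hins
      have hM'n : M'.card ≤ n := claim1 M' hM'P hM'sep
      have hgr : ¬ Q (M.card + 1) :=
        Nat.findGreatest_is_greatest (n := n) (k := M.card + 1) (by omega) (by omega)
      exact hgr ⟨M', hM'P, hM'sep, hM'card⟩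
    have hlen : M.toList.length = M.card := Finset.length_toList M
    refine ⟨fun i =>
      if h : (i : ℕ) < M.card then
        {p | p ∈ P ∧ dist p (M.toList.get ⟨i, by omega⟩) ≤ S}
      else ∅, ?_, ?_⟩
    · intro i
      dsimp only
      by_cases h : (i : ℕ) < M.card
      · rw [dif_pos h]
        have key : ∀ c : X, IsBounded {p | p ∈ P ∧ dist p c ≤ S} ∧
            diam {p | p ∈ P ∧ dist p c ≤ S} < 2 * S + 1 := by
          intro c
          have hsub : {p | p ∈ P ∧ dist p c ≤ S} ⊆ closedBall c S :=
            fun p hp => mem_closedBall.mpr hp.2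
          refine ⟨isBounded_closedBall.subset hsub, ?_⟩
          refine lt_of_le_of_lt (diam_le_of_forall_dist_le (C := 2 * S) (by linarith) ?_)
            (by linarith)
          intro p hp q hq
          have htr := dist_triangle_right p q c
          have h1 := hp.2
          have h2 := hq.2
          linarith
        exact key _
      · rw [dif_neg h]
        exact ⟨isBounded_empty, by rw [diam_empty]; linarith⟩
    · ext p
      simp only [Set.mem_iUnion]
      constructor
      · intro hp
        obtain ⟨m, hmM, hdm⟩ := claim2 p hp
        have hmL : m ∈ M.toList := Finset.mem_toList.mpr hmM
        obtain ⟨j, hj⟩ := List.mem_iff_get.mp hmL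
        have hjc : (j : ℕ) < M.card := by omega
        have hjn : (j : ℕ) < n := lt_of_lt_of_le hjc hMn
        refine ⟨⟨(j : ℕ), hjn⟩, ?_⟩
        rw [dif_pos (show ((⟨(j : ℕ), hjn⟩ : Fin n) : ℕ) < M.card from hjc)]
        refine ⟨hp, ?_⟩
        have hget : M.toList.get ⟨(j : ℕ), by omega⟩ = m := hj
        rw [hget]
        exact hdm
      · rintro ⟨i, hpi⟩
        by_cases h : (i : ℕ) < M.card
        · rw [dif_pos h] at hpi; exact hpi.1
        · rw [dif_neg h] at hpi; exact absurd hpi (Set.notMem_empty p)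
end

section
/- For i = 1,2 let X_i, Y_i be metric spaces and f_i : X_i → Y_i bornologous maps. If f_1 is coarsely n-to-one and f_2 is coarsely m-to-one, then the product map f_1 × f_2 : X_1 × X_2 → Y_1 × Y_2 (with ℓ¹-product metrics) is coarsely nm-to-one. -/
open Bornology Metric

/-!
A set `A` of diameter `< R` in `Y₁ × Y₂` projects to sets of diameter `< R` in each factor,
whose preimages are covered by `n` sets `Bᵢ` and `m` sets `B'ⱼ` of diameter `< Sₖ`. Since the
ℓ¹ distance is the sum of the coordinate distances, the `n * m` rectangles `Bᵢ × B'ⱼ` cover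
the preimage of `A` and have diameter `< S₁ + S₂`.
-/

namespace WithLp

variable {p : ENNReal} [Fact (1 ≤ p)] {α β : Type*} [PseudoMetricSpace α] [PseudoMetricSpace β]

lemma lipschitzWith_fst : LipschitzWith 1 (WithLp.fst : WithLp p (α × β) → α) :=
  LipschitzWith.of_edist_le edist_fst_le

lemma lipschitzWith_snd : LipschitzWith 1 (WithLp.snd : WithLp p (α × β) → β) :=
  LipschitzWith.of_edist_le edist_snd_le

lemma diam_image_fst_le {s : Set (WithLp p (α × β))} (hs : IsBounded s) :
    diam (WithLp.fst '' s) ≤ diam s := by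
  simpa using lipschitzWith_fst.diam_image_le s hs

lemma diam_image_snd_le {s : Set (WithLp p (α × β))} (hs : IsBounded s) :
    diam (WithLp.snd '' s) ≤ diam s := by
  simpa using lipschitzWith_snd.diam_image_le s hs

lemma prod_dist_eq_add_one (x y : WithLp 1 (α × β)) :
    dist x y = dist x.fst y.fst + dist x.snd y.snd := by
  simpa using prod_dist_eq_add (p := 1) (by norm_num) x y

section Rectangle

variable {s : Set α} {t : Set β}

lemma dist_le_diam_add_diam (hs : IsBounded s) (ht : IsBounded t) {x y : WithLp 1 (α × β)}
    (hx : x ∈ WithLp.fst ⁻¹' s ∩ WithLp.snd ⁻¹' t) (hy : y ∈ WithLp.fst ⁻¹' s ∩ WithLp.snd ⁻¹' t) :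
    dist x y ≤ diam s + diam t := by
  rw [prod_dist_eq_add_one]
  exact add_le_add (dist_le_diam_of_mem hs hx.1 hy.1) (dist_le_diam_of_mem ht hx.2 hy.2)

lemma isBounded_fst_preimage_inter_snd_preimage (hs : IsBounded s) (ht : IsBounded t) :
    IsBounded ((WithLp.fst : WithLp 1 (α × β) → α) ⁻¹' s ∩ WithLp.snd ⁻¹' t) :=
  isBounded_iff.mpr ⟨_, fun _ hx _ hy => dist_le_diam_add_diam hs ht hx hy⟩

lemma diam_fst_preimage_inter_snd_preimage_le (hs : IsBounded s) (ht : IsBounded t) :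
    diam ((WithLp.fst : WithLp 1 (α × β) → α) ⁻¹' s ∩ WithLp.snd ⁻¹' t) ≤ diam s + diam t :=
  diam_le_of_forall_dist_le (by positivity) fun _ hx _ hy => dist_le_diam_add_diam hs ht hx hy

end Rectangle

end WithLp

lemma coarselyNToOne_of_forall_subset_iUnion {X Y ι : Type*}
    [PseudoMetricSpace X] [PseudoMetricSpace Y] [Fintype ι] {n : ℕ}
    (hι : Fintype.card ι = n) {f : X → Y}
    (h : ∀ R > (0:ℝ), ∃ S > (0:ℝ), ∀ A : Set Y, IsBounded A → diam A < R →
      ∃ C : ι → Set X, (∀ i, IsBounded (C i) ∧ diam (C i) < S) ∧ f ⁻¹' A ⊆ ⋃ i, C i) :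
    CoarselyNToOne n f := by
  intro R hR
  obtain ⟨S, hS, hC⟩ := h R hR
  refine ⟨S, hS, fun A hA hdA => ?_⟩
  obtain ⟨C, hCS, hcover⟩ := hC A hA hdA
  let e : ι ≃ Fin n := Fintype.equivFinOfCardEq hι
  refine ⟨fun k => f ⁻¹' A ∩ C (e.symm k), fun k => ?_, ?_⟩
  · obtain ⟨hb, hd⟩ := hCS (e.symm k)
    exact ⟨hb.subset Set.inter_subset_right,
      (diam_mono Set.inter_subset_right hb).trans_lt hd⟩
  · rw [← Set.inter_iUnion, e.symm.surjective.iUnion_comp C, Set.inter_eq_left.mpr hcover]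

theorem CoarselyNToOne.withLpProdMap {X₁ X₂ Y₁ Y₂ : Type*}
    [PseudoMetricSpace X₁] [PseudoMetricSpace X₂] [PseudoMetricSpace Y₁] [PseudoMetricSpace Y₂]
    {f₁ : X₁ → Y₁} {f₂ : X₂ → Y₂} {n m : ℕ}
    (hn : CoarselyNToOne n f₁) (hm : CoarselyNToOne m f₂) :
    CoarselyNToOne (n * m)
      (fun p : WithLp 1 (X₁ × X₂) =>
        (WithLp.equiv 1 (Y₁ × Y₂)).symm
          (f₁ (WithLp.equiv 1 (X₁ × X₂) p).1, f₂ (WithLp.equiv 1 (X₁ × X₂) p).2)) := by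
  refine coarselyNToOne_of_forall_subset_iUnion (ι := Fin n × Fin m) (by simp) fun R hR => ?_
  obtain ⟨S₁, hS₁, H₁⟩ := hn R hR
  obtain ⟨S₂, hS₂, H₂⟩ := hm R hR
  refine ⟨S₁ + S₂, by positivity, fun A hA hdA => ?_⟩
  have hA₁ := WithLp.lipschitzWith_fst.isBounded_image hA
  have hA₂ := WithLp.lipschitzWith_snd.isBounded_image hA
  obtain ⟨B₁, hB₁, hU₁⟩ := H₁ _ hA₁ ((WithLp.diam_image_fst_le hA).trans_lt hdA)
  obtain ⟨B₂, hB₂, hU₂⟩ := H₂ _ hA₂ ((WithLp.diam_image_snd_le hA).trans_lt hdA)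
  refine ⟨fun ij => WithLp.fst ⁻¹' B₁ ij.1 ∩ WithLp.snd ⁻¹' B₂ ij.2, fun ⟨i, j⟩ => ?_, ?_⟩
  · exact ⟨WithLp.isBounded_fst_preimage_inter_snd_preimage (hB₁ i).1 (hB₂ j).1,
      (WithLp.diam_fst_preimage_inter_snd_preimage_le (hB₁ i).1 (hB₂ j).1).trans_lt
        (add_lt_add (hB₁ i).2 (hB₂ j).2)⟩
  · intro x hx
    have hx₁ : x.fst ∈ f₁ ⁻¹' (WithLp.fst '' A) := ⟨_, hx, rfl⟩
    have hx₂ : x.snd ∈ f₂ ⁻¹' (WithLp.snd '' A) := ⟨_, hx, rfl⟩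
    rw [hU₁, Set.mem_iUnion] at hx₁
    rw [hU₂, Set.mem_iUnion] at hx₂
    obtain ⟨i, hi⟩ := hx₁
    obtain ⟨j, hj⟩ := hx₂
    exact Set.mem_iUnion.mpr ⟨(i, j), hi, hj⟩

theorem stmt_6_general {X₁ X₂ Y₁ Y₂ : Type*}
    [MetricSpace X₁] [MetricSpace X₂] [MetricSpace Y₁] [MetricSpace Y₂]
    (f₁ : X₁ → Y₁) (f₂ : X₂ → Y₂)
    (n m : ℕ) (hn : CoarselyNToOne n f₁) (hm : CoarselyNToOne m f₂) :
    CoarselyNToOne (n * m)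
      (fun p : WithLp 1 (X₁ × X₂) =>
        (WithLp.equiv 1 (Y₁ × Y₂)).symm
          (f₁ (WithLp.equiv 1 (X₁ × X₂) p).1, f₂ (WithLp.equiv 1 (X₁ × X₂) p).2)) :=
  hn.withLpProdMap hm

/-- If `f₁` is coarsely `n`-to-one and `f₂` is coarsely `m`-to-one (both bornologous), then
`f₁ × f₂` between the ℓ¹-products is coarsely `nm`-to-one. -/
theorem stmt_6 {X₁ X₂ Y₁ Y₂ : Type*}
    [MetricSpace X₁] [MetricSpace X₂] [MetricSpace Y₁] [MetricSpace Y₂]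
    (f₁ : X₁ → Y₁) (f₂ : X₂ → Y₂) (h₁ : Bornologous f₁) (h₂ : Bornologous f₂)
    (n m : ℕ) (hn : CoarselyNToOne n f₁) (hm : CoarselyNToOne m f₂) :
    CoarselyNToOne (n * m)
      (fun p : WithLp 1 (X₁ × X₂) =>
        (WithLp.equiv 1 (Y₁ × Y₂)).symm
          (f₁ (WithLp.equiv 1 (X₁ × X₂) p).1, f₂ (WithLp.equiv 1 (X₁ × X₂) p).2)) :=
  stmt_6_general f₁ f₂ n m hn hm
end

section
/- Let X be a (λ,k,E,C,θ,L)-coarsely convex space with base point O, and suppose Ω ≥ 1 is a constant such that the Gromov-type product ⟨·|·⟩_O on X ∪ ∂_O X satisfies ⟨x|z⟩ ≥ Ω⁻¹ min{⟨x|y⟩,⟨y|z⟩} for all x,y,z. Let f : X → Y be a map into a metric space with base point b such that there exists a non-decreasing map ρ̂ : [0,∞) → [0,∞) with ⟨f(x)|f(y)⟩_b ≥ ρ̂(⟨x|y⟩_a) for all x,y ∈ X, where ⟨·|·⟩_b also satisfies the Ω-quasi-ultrametric inequality. If ∂f : ∂X → ∂Y is defined by ∂f([γ]) = lim_n f(γ(n))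 (assumed to exist), then for all boundary points u,v ∈ ∂X: ⟨∂f(u) | ∂f(v)⟩_b ≥ Ω⁻² ρ̂(Ω⁻² ⟨u|v⟩_a). -/
open Filter


private lemma aux_lim (Ω : NNReal) (a c : ENNReal) (b : ℕ → ENNReal)
    (hb : Tendsto b atTop (nhds ⊤))
    (h : ∀ᶠ n in atTop, (Ω : ENNReal)⁻¹ * min (b n) c ≤ a) :
    (Ω : ENNReal)⁻¹ * c ≤ a := by
  have h0 : (Ω : ENNReal)⁻¹ ≠ 0 := ENNReal.inv_ne_zero.mpr ENNReal.coe_ne_top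
  rcases eq_or_ne c ⊤ with rfl | hc
  · have hmul : Tendsto (fun n => (Ω : ENNReal)⁻¹ * b n) atTop (nhds ((Ω : ENNReal)⁻¹ * ⊤)) :=
      ENNReal.Tendsto.const_mul hb (Or.inl (by simp))
    have htop : (Ω : ENNReal)⁻¹ * ⊤ = ⊤ := by simp [ENNReal.mul_top, h0]
    rw [htop] at hmul
    have ha : (⊤ : ENNReal) ≤ a := le_of_tendsto hmul (h.mono fun n hn => by simpa using hn)
    exact le_top.trans ha
  · have hev : ∀ᶠ n in atTop, c < b n := hb.eventually (lt_mem_nhds hc.lt_top)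
    obtain ⟨n, h1, h2⟩ := (h.and hev).exists
    calc (Ω : ENNReal)⁻¹ * c = (Ω : ENNReal)⁻¹ * min (b n) c := by rw [min_eq_right h2.le]
      _ ≤ a := h1

/-- Abstract version of `⟨∂f(u)|∂f(v)⟩_b ≥ Ω⁻² ρ̂(Ω⁻² ⟨u|v⟩_a)`:
`p`, `q` are symmetric `[0,∞]`-valued products with the `Ω`-quasi-ultrametric inequality,
`(x_n)`, `(y_n)` are sequences converging to `u`, `v` in the sense of the products whose
`F`-images converge to `∂f(u) = fu`, `∂f(v) = fv`, and `q (F x) (F y) ≥ ρ̂ (p x y)` along the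
sequences for a non-decreasing `ρ̂`. -/
theorem stmt_9 {P Q : Type*} (p : P → P → ENNReal) (q : Q → Q → ENNReal)
    (Ω : NNReal) (hΩ : 1 ≤ Ω)
    (hpsym : ∀ x y, p x y = p y x) (hqsym : ∀ x y, q x y = q y x)
    (hpu : ∀ x y z, (Ω : ENNReal)⁻¹ * min (p x y) (p y z) ≤ p x z)
    (hqu : ∀ x y z, (Ω : ENNReal)⁻¹ * min (q x y) (q y z) ≤ q x z)
    (F : P → Q) (ρhat : ENNReal → ENNReal) (hρ : Monotone ρhat)
    (u v : P) (fu fv : Q) (hfin : p u v ≠ ⊤)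
    (x y : ℕ → P)
    (hxu : Tendsto (fun n => p (x n) u) atTop (nhds ⊤))
    (hyv : Tendsto (fun n => p (y n) v) atTop (nhds ⊤))
    (hfxu : Tendsto (fun n => q (F (x n)) fu) atTop (nhds ⊤))
    (hfyv : Tendsto (fun n => q (F (y n)) fv) atTop (nhds ⊤))
    (hlow : ∀ n m, ρhat (p (x n) (y m)) ≤ q (F (x n)) (F (y m))) :
    ((Ω : ENNReal)⁻¹) ^ 2 * ρhat (((Ω : ENNReal)⁻¹) ^ 2 * p u v) ≤ q fu fv := by
  have h0 : (Ω : ENNReal)⁻¹ ≠ 0 := ENNReal.inv_ne_zero.mpr ENNReal.coe_ne_top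
  have hinvle : (Ω : ENNReal)⁻¹ ≤ 1 := ENNReal.inv_le_one.mpr (by exact_mod_cast hΩ)
  have hfin1 : (Ω : ENNReal)⁻¹ * p u v ≠ ⊤ :=
    ENNReal.mul_ne_top (ne_top_of_le_ne_top ENNReal.one_ne_top hinvle) hfin
  set R : ENNReal := ρhat (((Ω : ENNReal)⁻¹) ^ 2 * p u v) with hR
  -- Step 1: eventually Ω⁻¹ * p u v ≤ p u (y m)
  have step1 : ∀ᶠ m in atTop, (Ω : ENNReal)⁻¹ * p u v ≤ p u (y m) := by
    filter_upwards [hyv.eventually (lt_mem_nhds hfin.lt_top)] with m hm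
    have h := hpu u v (y m)
    rwa [min_eq_left (by rw [hpsym v (y m)]; exact hm.le)] at h
  -- eventually Ω⁻¹ * p u v ≤ p (x n) u
  have evn : ∀ᶠ n in atTop, (Ω : ENNReal)⁻¹ * p u v < p (x n) u :=
    hxu.eventually (lt_mem_nhds hfin1.lt_top)
  -- Step 2: R ≤ q (F (x n)) (F (y m)) for n in evn, m in step1
  have step2 : ∀ n m, (Ω : ENNReal)⁻¹ * p u v < p (x n) u →
      (Ω : ENNReal)⁻¹ * p u v ≤ p u (y m) → R ≤ q (F (x n)) (F (y m)) := by
    intro n m hn hm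
    have h := hpu (x n) u (y m)
    have hmin : (Ω : ENNReal)⁻¹ * p u v ≤ min (p (x n) u) (p u (y m)) :=
      le_min hn.le hm
    have hp : ((Ω : ENNReal)⁻¹) ^ 2 * p u v ≤ p (x n) (y m) := by
      calc ((Ω : ENNReal)⁻¹) ^ 2 * p u v
          = (Ω : ENNReal)⁻¹ * ((Ω : ENNReal)⁻¹ * p u v) := by rw [pow_two, mul_assoc]
        _ ≤ (Ω : ENNReal)⁻¹ * min (p (x n) u) (p u (y m)) := mul_le_mul_right hmin _
        _ ≤ p (x n) (y m) := h
    exact (hρ hp).trans (hlow n m)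
  -- Step 3: eventually Ω⁻¹ * R ≤ q fu (F (y m))
  have step3 : ∀ᶠ m in atTop, (Ω : ENNReal)⁻¹ * R ≤ q fu (F (y m)) := by
    filter_upwards [step1] with m hm
    apply aux_lim Ω _ R (fun n => q (F (x n)) fu) hfxu
    filter_upwards [evn] with n hn
    have hq := hqu fu (F (x n)) (F (y m))
    calc (Ω : ENNReal)⁻¹ * min (q (F (x n)) fu) R
        ≤ (Ω : ENNReal)⁻¹ * min (q fu (F (x n))) (q (F (x n)) (F (y m))) := by
          rw [hqsym (F (x n)) fu]
          exact mul_le_mul_right (min_le_min le_rfl (step2 n m hn hm)) _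
      _ ≤ q fu (F (y m)) := hq
  -- Conclusion
  have : (Ω : ENNReal)⁻¹ * ((Ω : ENNReal)⁻¹ * R) ≤ q fu fv := by
    apply aux_lim Ω _ _ (fun m => q (F (y m)) fv) hfyv
    filter_upwards [step3] with m hm
    have hq := hqu fu (F (y m)) fv
    calc (Ω : ENNReal)⁻¹ * min (q (F (y m)) fv) ((Ω : ENNReal)⁻¹ * R)
        ≤ (Ω : ENNReal)⁻¹ * min (q fu (F (y m))) (q (F (y m)) fv) := by
          rw [min_comm (q (F (y m)) fv)]
          exact mul_le_mul_right (min_le_min hm le_rfl) _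
      _ ≤ q fu fv := hq
  calc ((Ω : ENNReal)⁻¹) ^ 2 * R = (Ω : ENNReal)⁻¹ * ((Ω : ENNReal)⁻¹ * R) := by
        rw [pow_two, mul_assoc]
    _ ≤ q fu fv := this
end

section
/- Let X be a (λ,k,E,C,θ,L)-coarsely convex space with base point a, let Y be a metric space with base point b, let σ : [0,∞) → [0,∞) be a τ-rough contraction, and let f : X → Y be a large scale Lipschitz map that is weakly σ-L_a-radial, i.e. for every x ∈ X there exist γ_x ∈ L_a and T_x ≥ 0 with x = γ_x(T_x) and σ(T_x) ≤ d(f(x), f(a)). Then f is σ̂-L_a-radial with σ̂(t) := max{σ(t) − θ(0) − τ, 0}, i.e. for every γ ∈ L_a and every t ∈ Dom γ, σ̂(t) ≤ d(f(γ(t)), f(a)). -/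
/-- A weakly `σ`-`L_a`-radial large scale Lipschitz map is `σ̂`-`L_a`-radial with
`σ̂(t) = max (σ(t) − θ(0) − τ) 0`. Here the family `La` of good quasi-geodesic segments
starting at `a` is modelled as a set of pairs `(γ, L)` (a map `γ : ℝ → X` with domain
`[0,L]`), all starting at `a`, with the reparametrization property of a coarsely convex
space: if `γ(t) = η(s)` for members of `La`, then `|t − s| ≤ θ(0)`. -/
theorem stmt_11 {X Y : Type*} [MetricSpace X] [MetricSpace Y] (a : X) (f : X → Y)
    (La : Set ((ℝ → X) × ℝ)) (θ0 : ℝ) (hθ0 : 0 ≤ θ0)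
    (hstart : ∀ p ∈ La, p.1 0 = a)
    (hLnonneg : ∀ p ∈ La, 0 ≤ p.2)
    (hreparam : ∀ p ∈ La, ∀ q ∈ La, ∀ t ∈ Set.Icc (0:ℝ) p.2, ∀ s ∈ Set.Icc (0:ℝ) q.2,
      p.1 t = q.1 s → |t - s| ≤ θ0)
    (A B : ℝ) (hA : 1 ≤ A) (hB : 0 ≤ B)
    (hLip : ∀ x x', dist (f x) (f x') ≤ A * dist x x' + B)
    (τ : ℝ) (hτ : 0 ≤ τ) (σ : ℝ → ℝ) (hσ : RoughContraction τ σ)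
    (hweak : ∀ x : X, ∃ p ∈ La, ∃ T ∈ Set.Icc (0:ℝ) p.2,
      p.1 T = x ∧ σ T ≤ dist (f x) (f a)) :
    ∀ p ∈ La, ∀ t ∈ Set.Icc (0:ℝ) p.2,
      max (σ t - θ0 - τ) 0 ≤ dist (f (p.1 t)) (f a) := by
  intro p hp t ht
  obtain ⟨q, hq, T, hT, hqT, hσT⟩ := hweak (p.1 t)
  have hrep := hreparam p hp q hq t ht T hT hqT.symm
  have hlip : |σ t - σ T| ≤ |t - T| + τ := hσ.2.2.2.2.1 T t hT.1 ht.1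
  have h2 : σ t - σ T ≤ θ0 + τ := (le_abs_self _).trans (by linarith)
  apply max_le (by linarith) dist_nonneg
end

section
/- Let X be a (λ,k,E,C,θ,L)-coarsely convex space with base point O, and let γ, γ' ∈ L̄_O be good quasi-geodesics (segments or rays) starting at O. Set D := 2(1+E)k₁ + C with k₁ = λ + k, θ̃(t) := θ(t+1)+1, and define the product (γ|γ') := sup{ t ∈ Dom γ ∩ Dom γ' : d(γ(t), γ'(t)) ≤ 2D+2 }. Then for any t ∈ Dom γ, t' ∈ Dom γ', setting α := d(γ(t), γ'(t')), we have (γ | γ') ≥ (max{t,t'} − θ̃(α)) / (E(α + λθ̃(α) + k₁)). -/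
/-!
Put `θ := θ̃(α)`, `A := α + λθ + k₁` and `N := max t t' − θ`, and assume `N > 0`. The
reparametrization bound gives `|t − t'| ≤ θ`, so `m := min t t' ≥ N`, and comparing both
curves at the common time `m` costs at most `λθ + k₁`: `d(γ m, γ' m) ≤ A`. Coarse convexity
from `O` at the time `r := N / (E A) ≤ m` then gives `d(γ r, γ' r) ≤ (r/m) E A + D = N/m + D
≤ D + 1`, so `r` is admissible in the supremum.
-/

open Set

lemma Icc_zero_subset_of_mul_mem {S : Set ℝ} (hS : ∀ a ∈ S, ∀ c ∈ Icc (0 : ℝ) 1, c * a ∈ S)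
    {a : ℝ} (ha : a ∈ S) : Icc 0 a ⊆ S := by
  rintro b ⟨hb0, hba⟩
  -- for `a = 0` this uses the junk value `b / 0 = 0`
  have hb : b / a * a = b := by
    rcases eq_or_ne a 0 with rfl | ha0
    · simp [le_antisymm hba hb0]
    · exact div_mul_cancel₀ b ha0
  rw [← hb]
  exact hS a ha _ ⟨div_nonneg hb0 (hb0.trans hba), div_le_one_of_le₀ hba (hb0.trans hba)⟩

section Bigon

variable {X : Type*} [MetricSpace X] {lam k₁ E D : ℝ} {γ γ' : ℝ → X} {Dγ Dγ' : Set ℝ}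

lemma dist_min_le_of_quasiGeodesic
    (hqg : ∀ s ∈ Dγ, ∀ t ∈ Dγ, dist (γ s) (γ t) ≤ lam * |s - t| + k₁)
    (hqg' : ∀ s ∈ Dγ', ∀ t ∈ Dγ', dist (γ' s) (γ' t) ≤ lam * |s - t| + k₁)
    {t t' : ℝ} (ht : t ∈ Dγ) (ht' : t' ∈ Dγ') (hm : min t t' ∈ Dγ) (hm' : min t t' ∈ Dγ') :
    dist (γ (min t t')) (γ' (min t t')) ≤ dist (γ t) (γ' t') + lam * |t - t'| + k₁ := by
  rcases le_total t t' with h | h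
  · rw [min_eq_left h] at hm' ⊢
    calc dist (γ t) (γ' t) ≤ dist (γ t) (γ' t') + dist (γ' t') (γ' t) := dist_triangle _ _ _
      _ ≤ dist (γ t) (γ' t') + (lam * |t' - t| + k₁) := by gcongr; exact hqg' t' ht' t hm'
      _ = _ := by rw [abs_sub_comm]; ring
  · rw [min_eq_right h] at hm ⊢
    calc dist (γ t') (γ' t') ≤ dist (γ t') (γ t) + dist (γ t) (γ' t') := dist_triangle _ _ _
      _ ≤ (lam * |t' - t| + k₁) + dist (γ t) (γ' t') := by gcongr; exact hqg t' hm t ht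
      _ = _ := by rw [abs_sub_comm]; ring

lemma dist_le_of_coarselyConvex
    (hconv : ∀ t ∈ Dγ, ∀ s ∈ Dγ', ∀ c ∈ Icc (0:ℝ) 1,
      dist (γ (c * t)) (γ' (c * s)) ≤
        c * E * dist (γ t) (γ' s) + (1 - c) * E * dist (γ 0) (γ' 0) + D)
    (h0 : γ 0 = γ' 0) {m r : ℝ} (hm : m ∈ Dγ) (hm' : m ∈ Dγ') (hm0 : 0 < m)
    (hr0 : 0 ≤ r) (hrm : r ≤ m) :
    dist (γ r) (γ' r) ≤ r / m * (E * dist (γ m) (γ' m)) + D := by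
  have h := hconv m hm m hm' (r / m) ⟨div_nonneg hr0 hm0.le, div_le_one_of_le₀ hrm hm0.le⟩
  rwa [div_mul_cancel₀ r hm0.ne', h0, dist_self, mul_zero, add_zero, mul_assoc] at h

end Bigon

theorem stmt_13_general {X : Type*} [MetricSpace X] (O : X)
    (lam k₁ E D : ℝ) (hlam : 1 ≤ lam) (hk₁ : 0 ≤ k₁) (hE : 1 ≤ E) (hD : 0 ≤ D)
    (θt : ℝ → ℝ) (hθ1 : ∀ s, 1 ≤ θt s)
    (γ γ' : ℝ → X) (Dγ Dγ' : Set ℝ)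
    (hscale : ∀ t ∈ Dγ, ∀ c ∈ Set.Icc (0:ℝ) 1, c * t ∈ Dγ)
    (hscale' : ∀ t ∈ Dγ', ∀ c ∈ Set.Icc (0:ℝ) 1, c * t ∈ Dγ')
    (hO : γ 0 = O) (hO' : γ' 0 = O)
    (hqg : ∀ s ∈ Dγ, ∀ t ∈ Dγ, dist (γ s) (γ t) ≤ lam * |s - t| + k₁)
    (hqg' : ∀ s ∈ Dγ', ∀ t ∈ Dγ', dist (γ' s) (γ' t) ≤ lam * |s - t| + k₁)
    (hconv : ∀ t ∈ Dγ, ∀ s ∈ Dγ', ∀ c ∈ Set.Icc (0:ℝ) 1,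
      dist (γ (c * t)) (γ' (c * s)) ≤
        c * E * dist (γ t) (γ' s) + (1 - c) * E * dist (γ 0) (γ' 0) + D)
    (hreparam : ∀ t ∈ Dγ, ∀ s ∈ Dγ',
      |t - s| ≤ θt (dist (γ 0) (γ' 0) + dist (γ t) (γ' s)))
    (t t' : ℝ) (ht : t ∈ Dγ) (ht' : t' ∈ Dγ') :
    ENNReal.ofReal ((max t t' - θt (dist (γ t) (γ' t'))) /
        (E * (dist (γ t) (γ' t') + lam * θt (dist (γ t) (γ' t')) + k₁)))
      ≤ ⨆ u ∈ {u : ℝ | u ∈ Dγ ∧ u ∈ Dγ' ∧ dist (γ u) (γ' u) ≤ 2 * D + 2},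
          ENNReal.ofReal u := by
  set α := dist (γ t) (γ' t')
  set θ := θt α
  set A := α + lam * θ + k₁
  set N := max t t' - θ
  set m := min t t'
  have hγ0 : γ 0 = γ' 0 := hO.trans hO'.symm
  have htt' : |t - t'| ≤ θ := by
    have h := hreparam t ht t' ht'
    rwa [hγ0, dist_self, zero_add] at h
  have hEA : 1 ≤ E * A := one_le_mul_of_one_le_of_one_le hE (by
    linarith [one_le_mul_of_one_le_of_one_le hlam (hθ1 α), dist_nonneg (x := γ t) (y := γ' t')])
  rcases le_or_gt N 0 with hN | hN
  · rw [ENNReal.ofReal_eq_zero.mpr (div_nonpos_of_nonpos_of_nonneg hN (by linarith))]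
    exact zero_le
  have hNm : N ≤ m := by linarith [max_sub_min_eq_abs' t t']
  have hm0 : 0 < m := hN.trans_le hNm
  set r := N / (E * A)
  have hr0 : 0 ≤ r := div_nonneg hN.le (by linarith)
  have hrm : r ≤ m := (div_le_self hN.le hEA).trans hNm
  have hm : m ∈ Dγ := Icc_zero_subset_of_mul_mem hscale ht ⟨hm0.le, min_le_left t t'⟩
  have hm' : m ∈ Dγ' := Icc_zero_subset_of_mul_mem hscale' ht' ⟨hm0.le, min_le_right t t'⟩
  have hdm : dist (γ m) (γ' m) ≤ A := by
    linarith [dist_min_le_of_quasiGeodesic hqg hqg' ht ht' hm hm',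
      mul_le_mul_of_nonneg_left htt' (by linarith : 0 ≤ lam)]
  have hr : dist (γ r) (γ' r) ≤ 2 * D + 2 := calc
    dist (γ r) (γ' r) ≤ r / m * (E * dist (γ m) (γ' m)) + D :=
      dist_le_of_coarselyConvex hconv hγ0 hm hm' hm0 hr0 hrm
    _ ≤ r / m * (E * A) + D := by gcongr
    _ = N / m + D := by rw [div_mul_eq_mul_div, div_mul_cancel₀ N (by linarith)]
    _ ≤ 2 * D + 2 := by linarith [(div_le_one hm0).mpr hNm]
  exact le_iSup₂_of_le r ⟨Icc_zero_subset_of_mul_mem hscale hm ⟨hr0, hrm⟩,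
    Icc_zero_subset_of_mul_mem hscale' hm' ⟨hr0, hrm⟩, hr⟩ le_rfl

/-- Lower estimate of the Gromov-type product along a bigon (Lemma `prod-est-bigon`):
for good quasi-geodesics `γ, γ'` starting at `O` in a coarsely convex space (modelled
abstractly via the coarse convexity inequality, the reparametrization bound, and the
quasi-geodesic upper bound, with domains closed under scaling by `c ∈ [0,1]`), and
`t ∈ Dom γ`, `t' ∈ Dom γ'` with `α := d(γ(t), γ'(t'))`, the product
`(γ|γ') = sup{u ∈ Dom γ ∩ Dom γ' : d(γ(u), γ'(u)) ≤ 2D+2}` (as a value in `[0,∞]`)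
satisfies `(γ|γ') ≥ (max t t' − θ̃(α)) / (E(α + λθ̃(α) + k₁))`. -/
theorem stmt_13 {X : Type*} [MetricSpace X] (O : X)
    (lam k₁ E D : ℝ) (hlam : 1 ≤ lam) (hk₁ : 0 ≤ k₁) (hE : 1 ≤ E) (hD : 0 ≤ D)
    (θt : ℝ → ℝ) (hθmono : Monotone θt) (hθ1 : ∀ s, 1 ≤ θt s)
    (γ γ' : ℝ → X) (Dγ Dγ' : Set ℝ)
    (hD0 : (0:ℝ) ∈ Dγ) (hD0' : (0:ℝ) ∈ Dγ')
    (hsub : Dγ ⊆ Set.Ici 0) (hsub' : Dγ' ⊆ Set.Ici 0)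
    (hscale : ∀ t ∈ Dγ, ∀ c ∈ Set.Icc (0:ℝ) 1, c * t ∈ Dγ)
    (hscale' : ∀ t ∈ Dγ', ∀ c ∈ Set.Icc (0:ℝ) 1, c * t ∈ Dγ')
    (hO : γ 0 = O) (hO' : γ' 0 = O)
    (hqg : ∀ s ∈ Dγ, ∀ t ∈ Dγ, dist (γ s) (γ t) ≤ lam * |s - t| + k₁)
    (hqg' : ∀ s ∈ Dγ', ∀ t ∈ Dγ', dist (γ' s) (γ' t) ≤ lam * |s - t| + k₁)
    (hconv : ∀ t ∈ Dγ, ∀ s ∈ Dγ', ∀ c ∈ Set.Icc (0:ℝ) 1,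
      dist (γ (c * t)) (γ' (c * s)) ≤
        c * E * dist (γ t) (γ' s) + (1 - c) * E * dist (γ 0) (γ' 0) + D)
    (hreparam : ∀ t ∈ Dγ, ∀ s ∈ Dγ',
      |t - s| ≤ θt (dist (γ 0) (γ' 0) + dist (γ t) (γ' s)))
    (t t' : ℝ) (ht : t ∈ Dγ) (ht' : t' ∈ Dγ') :
    ENNReal.ofReal ((max t t' - θt (dist (γ t) (γ' t'))) /
        (E * (dist (γ t) (γ' t') + lam * θt (dist (γ t) (γ' t')) + k₁)))
      ≤ ⨆ u ∈ {u : ℝ | u ∈ Dγ ∧ u ∈ Dγ' ∧ dist (γ u) (γ' u) ≤ 2 * D + 2},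
          ENNReal.ofReal u :=
  stmt_13_general O lam k₁ E D hlam hk₁ hE hD θt hθ1 γ γ' Dγ Dγ' hscale hscale' hO hO' hqg hqg'
    hconv hreparam t t' ht ht'
end

section
/- Let X be a metric space with base point a and let (x | y)_a ∈ [0,∞] be a product on X satisfying: (i) for every x ∈ X with d(x,a) > 2λθ(0)+k, (x|x)_a ≤ λ'Ω(d(x,a) + k') for constants λ',Ω,k' (uniform bound of self-product by distance to base point). Let f : X → Y be a map to a metric space with base point b, with analogous product (·|·)_b on Y satisfying (f(x)|f(x))_b ≤ λ'Ω(d(f(x),b) + k'). If f is visual, i.e. (x_n|y_n)_a → ∞ implies (f(x_n)|f(y_n))_b → ∞, then f is metrically proper: for any sequence (x_n) with d(x_n,a) → ∞ and sup_n d(f(x_n), b) < ∞, we obtain a contradiction; equivalently, preimages of bounded sets under f are bounded, assuming additionally that every sequence (x_n) in X with d(x_n,a) → ∞ has a subsequence with (x_{N_k} | x_{N_l})_a → ∞ as k,l → ∞. -/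
open Filter

/-- Visual maps are metrically proper (abstract version). `p`, `q` are Gromov-type
products on `X`, `Y` based at `a`, `b`; self-products grow at most linearly in the distance
to the base point; `X` has the Ascoli–Arzelà-type property that any sequence going to
infinity has a subsequence along which the products diverge; and `f` is visual. Then no
sequence with `d(x_n, a) → ∞` can have `f`-image at bounded distance from `b`. -/
theorem stmt_14 {X Y : Type*} [MetricSpace X] [MetricSpace Y] (a : X) (b : Y)
    (p : X → X → ENNReal) (q : Y → Y → ENNReal)
    (lam' Ω k' c₀ : ℝ) (hlam' : 0 < lam') (hΩ : 1 ≤ Ω) (hk' : 0 ≤ k')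
    (hpself : ∀ x : X, c₀ < dist x a →
      p x x ≤ ENNReal.ofReal (lam' * Ω * (dist x a + k')))
    (f : X → Y)
    (hqself : ∀ x : X, q (f x) (f x) ≤ ENNReal.ofReal (lam' * Ω * (dist (f x) b + k')))
    (hAA : ∀ x : ℕ → X, Tendsto (fun n => dist (x n) a) atTop atTop →
      ∃ N : ℕ → ℕ, StrictMono N ∧
        Tendsto (fun kl : ℕ × ℕ => p (x (N kl.1)) (x (N kl.2))) atTop (nhds ⊤))
    (hvis : ∀ x y : ℕ → X, Tendsto (fun n => p (x n) (y n)) atTop (nhds ⊤) →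
      Tendsto (fun n => q (f (x n)) (f (y n))) atTop (nhds ⊤)) :
    ∀ x : ℕ → X, Tendsto (fun n => dist (x n) a) atTop atTop →
      ¬ ∃ M : ℝ, ∀ n, dist (f (x n)) b ≤ M := by
  intro x hx ⟨M, hM⟩
  obtain ⟨N, hNmono, hNp⟩ := hAA x hx
  have hdiag : Tendsto (fun n : ℕ => p (x (N n)) (x (N n))) atTop (nhds ⊤) :=
    hNp.comp (tendsto_atTop_diagonal : Tendsto (fun n : ℕ => (n, n)) atTop atTop)
  have hq := hvis (fun n => x (N n)) (fun n => x (N n)) hdiag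
  have hbd : ∀ n, q (f (x (N n))) (f (x (N n))) ≤
      ENNReal.ofReal (lam' * Ω * (M + k')) := by
    intro n
    refine (hqself (x (N n))).trans (ENNReal.ofReal_le_ofReal ?_)
    have h1 : dist (f (x (N n))) b + k' ≤ M + k' := by linarith [hM (N n)]
    have h2 : 0 ≤ lam' * Ω := le_of_lt (by nlinarith)
    nlinarith [hM (N n)]
  have hlt : ENNReal.ofReal (lam' * Ω * (M + k')) < ⊤ := ENNReal.ofReal_lt_top
  have := (hq.eventually (eventually_gt_nhds hlt)).exists
  obtain ⟨n, hn⟩ := this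
  exact absurd (hbd n) (not_le.mpr hn)
end

section
/- Let X be a (λ,k,E,C,θ,L)-coarsely convex space and γ, η ∈ L̄ good quasi-geodesics with γ(0) = η(0). Set k₁ = λ+k, D = 2(1+E)k₁+C, θ̃(t) = θ(t+1)+1. Then for all a ∈ Dom γ, b ∈ Dom η and 0 ≤ t ≤ min{a,b}: d(γ(t), η(t)) ≤ E(d(γ(a), η(b)) + λ·θ̃(d(γ(a),η(b))) + k₁) + D. -/
/-!
Write `t = c·a` with `c ∈ [0,1]`. Coarse convexity along the pair `(a, b)`, scaled by `c`, brings
`γ(t)` within `c·E·d(γ(a), η(b)) + D` of `η(c·b)`, since the base points agree. The points `c·b`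
and `t = c·a` of `Dom η` differ by at most `|a - b|`, which the reparametrization bound controls
by `θ̃(d(γ(a), η(b)))`; so `η(c·b)` is within `λ·θ̃(d(γ(a), η(b))) + k₁` of `η(t)`.
-/

lemma exists_mem_Icc_mul_eq {t a : ℝ} (ht : 0 ≤ t) (hta : t ≤ a) :
    ∃ c ∈ Set.Icc (0 : ℝ) 1, c * a = t := by
  rcases (ht.trans hta).eq_or_lt with rfl | ha
  · exact ⟨0, ⟨le_rfl, zero_le_one⟩, by rw [zero_mul, le_antisymm hta ht]⟩
  · exact ⟨t / a, ⟨div_nonneg ht ha.le, (div_le_one ha).2 hta⟩, div_mul_cancel₀ t ha.ne'⟩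

lemma abs_mul_sub_mul_le {c : ℝ} (hc : c ∈ Set.Icc (0 : ℝ) 1) (x y : ℝ) :
    |c * x - c * y| ≤ |x - y| := by
  rw [← mul_sub, abs_mul, abs_of_nonneg hc.1]
  exact mul_le_of_le_one_left (abs_nonneg _) hc.2

theorem stmt_16_general {X : Type*} [MetricSpace X]
    (lam k₁ E D : ℝ) (hlam : 1 ≤ lam) (hk₁ : 0 ≤ k₁) (hE : 1 ≤ E)
    (θt : ℝ → ℝ)
    (γ η : ℝ → X) (Dγ Dη : Set ℝ)
    (hscale' : ∀ t ∈ Dη, ∀ c ∈ Set.Icc (0:ℝ) 1, c * t ∈ Dη)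
    (hsame : γ 0 = η 0)
    (hqg' : ∀ s ∈ Dη, ∀ t ∈ Dη, dist (η s) (η t) ≤ lam * |s - t| + k₁)
    (hconv : ∀ t ∈ Dγ, ∀ s ∈ Dη, ∀ c ∈ Set.Icc (0:ℝ) 1,
      dist (γ (c * t)) (η (c * s)) ≤
        c * E * dist (γ t) (η s) + (1 - c) * E * dist (γ 0) (η 0) + D)
    (hreparam : ∀ t ∈ Dγ, ∀ s ∈ Dη,
      |t - s| ≤ θt (dist (γ 0) (η 0) + dist (γ t) (η s)))
    (a b t : ℝ) (ha : a ∈ Dγ) (hb : b ∈ Dη)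
    (htη : t ∈ Dη) (ht0 : 0 ≤ t) (htm : t ≤ min a b) :
    dist (γ t) (η t) ≤
      E * (dist (γ a) (η b) + lam * θt (dist (γ a) (η b)) + k₁) + D := by
  obtain ⟨c, hc, rfl⟩ := exists_mem_Icc_mul_eq ht0 (htm.trans (min_le_left a b))
  have hbase : dist (γ 0) (η 0) = 0 := by rw [hsame, dist_self]
  set d := dist (γ a) (η b)
  have hconv_c : dist (γ (c * a)) (η (c * b)) ≤ c * E * d + D := by
    simpa [hbase] using hconv a ha b hb c hc
  have hgap : |b - a| ≤ θt d := by simpa [hbase, abs_sub_comm] using hreparam a ha b hb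
  have hshift : |c * b - c * a| ≤ θt d := (abs_mul_sub_mul_le hc b a).trans hgap
  have hlam₀ : 0 ≤ lam := zero_le_one.trans hlam
  have hqg_c : dist (η (c * b)) (η (c * a)) ≤ lam * θt d + k₁ :=
    (hqg' _ (hscale' b hb c hc) _ htη).trans
      (add_le_add_left (mul_le_mul_of_nonneg_left hshift hlam₀) k₁)
  have hd : c * E * d ≤ E * d := by
    rw [mul_assoc]
    exact mul_le_of_le_one_left (mul_nonneg (zero_le_one.trans hE) dist_nonneg) hc.2
  have hθE : lam * θt d + k₁ ≤ E * (lam * θt d + k₁) :=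
    le_mul_of_one_le_left
      (add_nonneg (mul_nonneg hlam₀ ((abs_nonneg _).trans hgap)) hk₁) hE
  calc dist (γ (c * a)) (η (c * a))
      ≤ dist (γ (c * a)) (η (c * b)) + dist (η (c * b)) (η (c * a)) := dist_triangle _ _ _
    _ ≤ E * (d + lam * θt d + k₁) + D := by linarith

/-- (Lemma `t-ab`) For good quasi-geodesics `γ, η` of a coarsely convex space with
`γ(0) = η(0)` (modelled abstractly via the coarse convexity inequality, the
reparametrization bound and the quasi-geodesic upper bound, domains closed under scaling
by `c ∈ [0,1]`), for all `a ∈ Dom γ`, `b ∈ Dom η` and `0 ≤ t ≤ min a b`: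
`d(γ(t), η(t)) ≤ E(d(γ(a), η(b)) + λ·θ̃(d(γ(a), η(b))) + k₁) + D`. -/
theorem stmt_16 {X : Type*} [MetricSpace X]
    (lam k₁ E D : ℝ) (hlam : 1 ≤ lam) (hk₁ : 0 ≤ k₁) (hE : 1 ≤ E) (hD : 0 ≤ D)
    (θt : ℝ → ℝ) (hθmono : Monotone θt) (hθ0 : ∀ s, 0 ≤ θt s)
    (γ η : ℝ → X) (Dγ Dη : Set ℝ)
    (hD0 : (0:ℝ) ∈ Dγ) (hD0' : (0:ℝ) ∈ Dη)
    (hsub : Dγ ⊆ Set.Ici 0) (hsub' : Dη ⊆ Set.Ici 0)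
    (hscale : ∀ t ∈ Dγ, ∀ c ∈ Set.Icc (0:ℝ) 1, c * t ∈ Dγ)
    (hscale' : ∀ t ∈ Dη, ∀ c ∈ Set.Icc (0:ℝ) 1, c * t ∈ Dη)
    (hsame : γ 0 = η 0)
    (hqg : ∀ s ∈ Dγ, ∀ t ∈ Dγ, dist (γ s) (γ t) ≤ lam * |s - t| + k₁)
    (hqg' : ∀ s ∈ Dη, ∀ t ∈ Dη, dist (η s) (η t) ≤ lam * |s - t| + k₁)
    (hconv : ∀ t ∈ Dγ, ∀ s ∈ Dη, ∀ c ∈ Set.Icc (0:ℝ) 1,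
      dist (γ (c * t)) (η (c * s)) ≤
        c * E * dist (γ t) (η s) + (1 - c) * E * dist (γ 0) (η 0) + D)
    (hreparam : ∀ t ∈ Dγ, ∀ s ∈ Dη,
      |t - s| ≤ θt (dist (γ 0) (η 0) + dist (γ t) (η s)))
    (a b t : ℝ) (ha : a ∈ Dγ) (hb : b ∈ Dη)
    (htγ : t ∈ Dγ) (htη : t ∈ Dη) (ht0 : 0 ≤ t) (htm : t ≤ min a b) :
    dist (γ t) (η t) ≤
      E * (dist (γ a) (η b) + lam * θt (dist (γ a) (η b)) + k₁) + D :=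
  stmt_16_general lam k₁ E D hlam hk₁ hE θt γ η Dγ Dη hscale' hsame hqg' hconv hreparam a b t ha hb
    htη ht0 htm
end
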